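/- arXiv:2005.13608 — 3 statements merged into one kernel-verified Lean document; each statement's English description precedes it below -/
import Mathlib

section
/- For any graphs G and H without isolated vertices, γ_tR(G × H) ≥ max{ρ(G)·γ_tR(H), ρ(H)·γ_tR(G)}, where ρ denotes the packing number. -/
open Finset

/-- A total Roman dominating function: labels in {0,1,2}, every 0-labeled vertex has a
2-labeled neighbor, and positive-labeled vertices induce a subgraph with no isolated vertex. -/
def IsTRDF {V : Type*} (G : SimpleGraph V) (f : V → ℕ) : Prop :=
  (∀ v, f v ≤ 2) ∧
  (∀ v, f v = 0 → ∃ u, G.Adj v u ∧ f u = 2) ∧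
  (∀ v, 0 < f v → ∃ u, G.Adj v u ∧ 0 < f u)

/-- The total Roman domination number. -/
noncomputable def trdn {V : Type*} (G : SimpleGraph V) [Fintype V] : ℕ :=
  sInf {w | ∃ f : V → ℕ, IsTRDF G f ∧ ∑ v, f v = w}

/-- A total dominating set. -/
def IsTotalDomSet {V : Type*} (G : SimpleGraph V) (D : Set V) : Prop :=
  ∀ v, ∃ u ∈ D, G.Adj v u

/-- The total domination number. -/
noncomputable def tdn {V : Type*} (G : SimpleGraph V) [Fintype V] : ℕ :=
  sInf {n | ∃ D : Finset V, IsTotalDomSet G ↑D ∧ D.card = n}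

/-- A packing: pairwise disjoint closed neighborhoods. -/
def IsPacking {V : Type*} (G : SimpleGraph V) (S : Set V) : Prop :=
  ∀ u ∈ S, ∀ v ∈ S, u ≠ v →
    Disjoint (insert u (G.neighborSet u)) (insert v (G.neighborSet v))

/-- The packing number. -/
noncomputable def packingNumber {V : Type*} (G : SimpleGraph V) [Fintype V] : ℕ :=
  sSup {n | ∃ S : Finset V, IsPacking G ↑S ∧ S.card = n}

/-- An open packing: pairwise disjoint open neighborhoods. -/
def IsOpenPacking {V : Type*} (G : SimpleGraph V) (S : Set V) : Prop :=
  ∀ u ∈ S, ∀ v ∈ S, u ≠ v → Disjoint (G.neighborSet u) (G.neighborSet v)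

/-- The open packing number. -/
noncomputable def openPackingNumber {V : Type*} (G : SimpleGraph V) [Fintype V] : ℕ :=
  sSup {n | ∃ S : Finset V, IsOpenPacking G ↑S ∧ S.card = n}

/-- The direct (tensor) product of two simple graphs. -/
def dirProd {V W : Type*} (G : SimpleGraph V) (H : SimpleGraph W) : SimpleGraph (V × W) where
  Adj p q := G.Adj p.1 q.1 ∧ H.Adj p.2 q.2
  symm := ⟨fun p q h => ⟨h.1.symm, h.2.symm⟩⟩
  loopless := ⟨fun p h => G.irrefl h.1⟩

/-- A graph with no isolated vertices. -/
def NoIsolated {V : Type*} (G : SimpleGraph V) : Prop := ∀ v, ∃ u, G.Adj v u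

/-! Given a minimum total Roman dominating function `f` of `G × H` and a packing `S` of `G`,
each `v ∈ S` yields a total Roman dominating function of `H`: sum `f` over the fibres
`N[v] × {h}` and cap the result at `2`. Its weight is at least `γ_tR(H)`, and since the closed
neighbourhoods of a packing are disjoint these `|S|` weights together cost at most `w(f)`.
The other bound follows by symmetry of the direct product. -/

section

variable {V V' W : Type*}

lemma NoIsolated.dirProd {G : SimpleGraph V} {H : SimpleGraph W}
    (hG : NoIsolated G) (hH : NoIsolated H) : NoIsolated (dirProd G H) := fun p =>
  let ⟨u, hu⟩ := hG p.1
  let ⟨w, hw⟩ := hH p.2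
  ⟨(u, w), hu, hw⟩

def dirProdComm (G : SimpleGraph V) (H : SimpleGraph W) : dirProd G H ≃g dirProd H G where
  toEquiv := Equiv.prodComm V W
  map_rel_iff' := and_comm

lemma isTRDF_const_two {G : SimpleGraph V} (hG : NoIsolated G) : IsTRDF G fun _ => 2 :=
  ⟨fun _ => le_rfl, fun _ h => absurd h two_ne_zero,
    fun v _ => let ⟨u, hu⟩ := hG v; ⟨u, hu, two_pos⟩⟩

lemma IsTRDF.exists_adj_pos {G : SimpleGraph V} {f : V → ℕ} (hf : IsTRDF G f) (v : V) :
    ∃ u, G.Adj v u ∧ 0 < f u := by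
  rcases Nat.eq_zero_or_pos (f v) with h0 | hpos
  · obtain ⟨u, hadj, hu⟩ := hf.2.1 v h0
    exact ⟨u, hadj, hu ▸ two_pos⟩
  · exact hf.2.2 v hpos

lemma IsTRDF.comp_iso {G : SimpleGraph V} {G' : SimpleGraph V'} (e : G ≃g G')
    {f : V' → ℕ} (hf : IsTRDF G' f) : IsTRDF G (f ∘ e) := by
  obtain ⟨hle, hzero, hpos⟩ := hf
  refine ⟨fun v => hle (e v), fun v hv => ?_, fun v hv => ?_⟩
  · obtain ⟨u, hadj, hu⟩ := hzero (e v) hv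
    exact ⟨e.symm u, e.map_adj_iff.mp (by rwa [e.apply_symm_apply]),
      by rwa [Function.comp_apply, e.apply_symm_apply]⟩
  · obtain ⟨u, hadj, hu⟩ := hpos (e v) hv
    exact ⟨e.symm u, e.map_adj_iff.mp (by rwa [e.apply_symm_apply]),
      by rwa [Function.comp_apply, e.apply_symm_apply]⟩

lemma IsTRDF.min_two_sum_closedNeighborFinset [Fintype V] [DecidableEq V]
    {G : SimpleGraph V} [DecidableRel G.Adj] {H : SimpleGraph W}
    {f : V × W → ℕ} (hf : IsTRDF (dirProd G H) f) (v : V) :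
    IsTRDF H fun h => min 2 (∑ u ∈ insert v (G.neighborFinset v), f (u, h)) := by
  have le_fiberSum : ∀ q : V × W, G.Adj v q.1 →
      f q ≤ ∑ u ∈ insert v (G.neighborFinset v), f (u, q.2) := fun q hq =>
    single_le_sum (f := fun u => f (u, q.2)) (fun _ _ => Nat.zero_le _)
      (mem_insert_of_mem ((G.mem_neighborFinset v q.1).mpr hq))
  refine ⟨fun _ => min_le_left _ _, fun h h0 => ?_, fun h _ => ?_⟩
  · have hsum : ∑ u ∈ insert v (G.neighborFinset v), f (u, h) = 0 :=
      (Nat.min_eq_zero_iff.mp h0).resolve_left two_ne_zero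
    obtain ⟨q, hadj, hq⟩ := hf.2.1 (v, h)
      (sum_eq_zero_iff.mp hsum v (mem_insert_self v _))
    exact ⟨q.2, hadj.2, min_eq_left (hq ▸ le_fiberSum q hadj.1)⟩
  · obtain ⟨q, hadj, hq⟩ := hf.exists_adj_pos (v, h)
    exact ⟨q.2, hadj.2, lt_min two_pos (hq.trans_le (le_fiberSum q hadj.1))⟩

section Fintype

variable [Fintype V] [Fintype V'] [Fintype W]

lemma trdn_le_sum {G : SimpleGraph V} {f : V → ℕ} (hf : IsTRDF G f) : trdn G ≤ ∑ v, f v :=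
  Nat.sInf_le ⟨f, hf, rfl⟩

lemma exists_isTRDF_sum_eq_trdn {G : SimpleGraph V} (hG : NoIsolated G) :
    ∃ f : V → ℕ, IsTRDF G f ∧ ∑ v, f v = trdn G :=
  Nat.sInf_mem (s := {w | ∃ f : V → ℕ, IsTRDF G f ∧ ∑ v, f v = w})
    ⟨_, _, isTRDF_const_two hG, rfl⟩

lemma SimpleGraph.Iso.trdn_eq {G : SimpleGraph V} {G' : SimpleGraph V'} (e : G ≃g G') :
    trdn G = trdn G' := by
  refine congrArg sInf (Set.ext fun w => ⟨?_, ?_⟩)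
  · rintro ⟨f, hf, rfl⟩
    exact ⟨f ∘ e.symm, hf.comp_iso e.symm, e.symm.toEquiv.sum_comp f⟩
  · rintro ⟨f, hf, rfl⟩
    exact ⟨f ∘ e, hf.comp_iso e, e.toEquiv.sum_comp f⟩

lemma IsPacking.card_mul_trdn_le_sum {G : SimpleGraph V} {H : SimpleGraph W} {S : Finset V}
    (hS : IsPacking G ↑S) {f : V × W → ℕ} (hf : IsTRDF (dirProd G H) f) :
    #S * trdn H ≤ ∑ p, f p := by
  classical
  set N : V → Finset V := fun v => insert v (G.neighborFinset v)
  have hdisj : (S : Set V).PairwiseDisjoint N := fun u hu v hv huv => by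
    rw [Function.onFun, ← disjoint_coe]
    simpa [N] using hS u hu v hv huv
  calc #S * trdn H = ∑ _v ∈ S, trdn H := by rw [sum_const, smul_eq_mul]
    _ ≤ ∑ v ∈ S, ∑ h, min 2 (∑ u ∈ N v, f (u, h)) :=
        sum_le_sum fun v _ => trdn_le_sum (hf.min_two_sum_closedNeighborFinset v)
    _ ≤ ∑ v ∈ S, ∑ h, ∑ u ∈ N v, f (u, h) :=
        sum_le_sum fun _ _ => sum_le_sum fun _ _ => min_le_right _ _
    _ = ∑ u ∈ S.biUnion N, ∑ h, f (u, h) := by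
        rw [sum_biUnion hdisj]
        exact sum_congr rfl fun _ _ => sum_comm
    _ ≤ ∑ u, ∑ h, f (u, h) := sum_le_sum_of_subset (subset_univ _)
    _ = ∑ p, f p := (Fintype.sum_prod_type _).symm

lemma exists_isPacking_card_eq_packingNumber (G : SimpleGraph V) :
    ∃ S : Finset V, IsPacking G ↑S ∧ #S = packingNumber G :=
  Nat.sSup_mem (s := {n | ∃ S : Finset V, IsPacking G ↑S ∧ #S = n})
    ⟨0, ∅, fun u hu => absurd hu (notMem_empty u), card_empty⟩
    ⟨Fintype.card V, fun _ ⟨S, _, hS⟩ => hS ▸ card_le_univ S⟩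

lemma packingNumber_mul_trdn_le_trdn_dirProd {G : SimpleGraph V} {H : SimpleGraph W}
    (hG : NoIsolated G) (hH : NoIsolated H) :
    packingNumber G * trdn H ≤ trdn (dirProd G H) := by
  obtain ⟨f, hf, hsum⟩ := exists_isTRDF_sum_eq_trdn (hG.dirProd hH)
  obtain ⟨S, hS, hcard⟩ := exists_isPacking_card_eq_packingNumber G
  exact hcard ▸ hsum ▸ hS.card_mul_trdn_le_sum hf

end Fintype

end

theorem stmt_7 {V W : Type*} [Fintype V] [Fintype W]
    (G : SimpleGraph V) (H : SimpleGraph W)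
    (hG : NoIsolated G) (hH : NoIsolated H) :
    trdn (dirProd G H) ≥ max (packingNumber G * trdn H) (packingNumber H * trdn G) :=
  max_le (packingNumber_mul_trdn_le_trdn_dirProd hG hH)
    ((packingNumber_mul_trdn_le_trdn_dirProd hH hG).trans_eq (dirProdComm H G).trdn_eq)
end

section
/- If G is a graph with exactly one universal vertex, H is a graph with a universal vertex that is not isomorphic to K_2, and not both G and H are triangle centered, then γ_tR(G × H) ≤ 7. -/
open Finset

/-- A graph is triangle centered if it has a triangle such that every vertex is
adjacent to at least two of its vertices. -/
def TriangleCentered {V : Type*} (G : SimpleGraph V) : Prop :=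
  ∃ x y z : V, G.Adj x y ∧ G.Adj y z ∧ G.Adj x z ∧
    ∀ v : V, (G.Adj v x ∧ G.Adj v y) ∨ (G.Adj v y ∧ G.Adj v z) ∨ (G.Adj v x ∧ G.Adj v z)

/-- A universal vertex is adjacent to all other vertices. -/
def IsUniversalVertex {V : Type*} (G : SimpleGraph V) (v : V) : Prop :=
  ∀ u, u ≠ v → G.Adj v u

/-!
Pick a universal vertex `g` of `G` with a neighbour `g'`, and a universal vertex `h` of `H` with a
neighbour `a`. Label `(g, h)`, `(g, a)`, `(g', h)` with `2` and `(g', a)` with `1`. Then `(g, h)`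
dominates every `(v, w)` with `v ≠ g` and `w ≠ h`, `(g, a)` dominates the vertices `(v, h)` with
`v ≠ g`, and `(g', h)` dominates the vertices `(g, w)` with `w ≠ h`; the positive vertices are
matched by the edges `(g, h)(g', a)` and `(g, a)(g', h)`. This labelling has weight `7`.
-/

theorem trdn_le_of_isTRDF {V : Type*} [Fintype V] {G : SimpleGraph V} {f : V → ℕ}
    (hf : IsTRDF G f) : trdn G ≤ ∑ v, f v :=
  Nat.sInf_le ⟨f, hf, rfl⟩

section SquareLabel

variable {V W : Type*} [DecidableEq V] [DecidableEq W]

def squareLabel (g g' : V) (h a : W) : V × W → ℕ :=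
  Pi.single (g, h) 2 + Pi.single (g, a) 2 + Pi.single (g', h) 2 + Pi.single (g', a) 1

variable {g g' : V} {h a : W}

theorem squareLabel_apply (p : V × W) :
    squareLabel g g' h a p = (if p = (g, h) then 2 else 0) + (if p = (g, a) then 2 else 0) +
      (if p = (g', h) then 2 else 0) + (if p = (g', a) then 1 else 0) := by
  simp only [squareLabel, Pi.add_apply, Pi.single_apply]

theorem squareLabel_pos_iff {p : V × W} :
    0 < squareLabel g g' h a p ↔ p = (g, h) ∨ p = (g, a) ∨ p = (g', h) ∨ p = (g', a) := by
  rw [squareLabel_apply]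
  by_cases hA : p = (g, h) <;> by_cases hB : p = (g, a) <;> by_cases hC : p = (g', h) <;>
    by_cases hD : p = (g', a) <;> simp [hA, hB, hC, hD]

theorem squareLabel_le_two (hg : g ≠ g') (hh : h ≠ a) (p : V × W) :
    squareLabel g g' h a p ≤ 2 := by
  rw [squareLabel_apply]
  rcases p with ⟨v, w⟩
  by_cases hv : v = g <;> by_cases hv' : v = g' <;> by_cases hw : w = h <;>
    by_cases hw' : w = a <;> simp_all

theorem squareLabel_eq_two (hg : g ≠ g') (hh : h ≠ a) {p : V × W}
    (hp : p = (g, h) ∨ p = (g, a) ∨ p = (g', h)) : squareLabel g g' h a p = 2 := by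
  rw [squareLabel_apply]
  rcases hp with rfl | rfl | rfl <;> simp [hg, hh, hg.symm, hh.symm]

theorem sum_squareLabel [Fintype V] [Fintype W] : ∑ p, squareLabel g g' h a p = 7 := by
  simp only [squareLabel, Finset.sum_add_distrib, Pi.add_apply, Finset.sum_pi_single', mem_univ,
    if_true]

theorem isTRDF_squareLabel {G : SimpleGraph V} {H : SimpleGraph W}
    (hgu : IsUniversalVertex G g) (hhu : IsUniversalVertex H h) (hg : G.Adj g g')
    (hh : H.Adj h a) : IsTRDF (dirProd G H) (squareLabel g g' h a) := by
  refine ⟨squareLabel_le_two hg.ne hh.ne, ?_, ?_⟩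
  · rintro ⟨v, w⟩ hp
    rcases eq_or_ne w h with rfl | hw
    · have hv : v ≠ g := by
        rintro rfl
        exact (squareLabel_pos_iff.2 (Or.inl rfl)).ne' hp
      exact ⟨(g, a), ⟨(hgu v hv).symm, hh⟩,
        squareLabel_eq_two hg.ne hh.ne (by simp)⟩
    rcases eq_or_ne v g with rfl | hv
    · exact ⟨(g', h), ⟨hg, (hhu w hw).symm⟩,
        squareLabel_eq_two hg.ne hh.ne (by simp)⟩
    · exact ⟨(g, h), ⟨(hgu v hv).symm, (hhu w hw).symm⟩,
        squareLabel_eq_two hg.ne hh.ne (by simp)⟩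
  · intro p hp
    rcases squareLabel_pos_iff.1 hp with rfl | rfl | rfl | rfl
    · exact ⟨(g', a), ⟨hg, hh⟩, squareLabel_pos_iff.2 (by simp)⟩
    · exact ⟨(g', h), ⟨hg, hh.symm⟩, squareLabel_pos_iff.2 (by simp)⟩
    · exact ⟨(g, a), ⟨hg.symm, hh⟩, squareLabel_pos_iff.2 (by simp)⟩
    · exact ⟨(g, h), ⟨hg.symm, hh.symm⟩, squareLabel_pos_iff.2 (by simp)⟩

end SquareLabel

theorem stmt_16_general {V W : Type*} [Fintype V] [Fintype W]
    (G : SimpleGraph V) (H : SimpleGraph W)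
    (hG : NoIsolated G) (hH : NoIsolated H)
    (hGuniv : ∃! v, IsUniversalVertex G v)
    (hHuniv : ∃ w, IsUniversalVertex H w) :
    trdn (dirProd G H) ≤ 7 := by
  classical
  obtain ⟨g, hgu, -⟩ := hGuniv
  obtain ⟨h, hhu⟩ := hHuniv
  obtain ⟨g', hg⟩ := hG g
  obtain ⟨a, hh⟩ := hH h
  calc trdn (dirProd G H) ≤ ∑ p, squareLabel g g' h a p :=
        trdn_le_of_isTRDF (isTRDF_squareLabel hgu hhu hg hh)
    _ = 7 := sum_squareLabel

theorem stmt_16 {V W : Type*} [Fintype V] [Fintype W]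
    (G : SimpleGraph V) (H : SimpleGraph W)
    (hG : NoIsolated G) (hH : NoIsolated H)
    (hGuniv : ∃! v, IsUniversalVertex G v)
    (hHuniv : ∃ w, IsUniversalVertex H w)
    (hHK2 : ¬ Nonempty (H ≃g (⊤ : SimpleGraph (Fin 2))))
    (htc : ¬ (TriangleCentered G ∧ TriangleCentered H)) :
    trdn (dirProd G H) ≤ 7 :=
  stmt_16_general G H hG hH hGuniv hHuniv
end

section
/- For complete graphs K_r and K_s with r > 2 and s ≥ 2 (and at least one of r, s at least 3), γ_tR(K_r × K_s) = 6. -/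
open Finset

/-!
Write `P` and `Q` for the vertices labelled positively and labelled `2`; the weight of a
total Roman dominating function is `#P + #Q`. Labelling a 2 × 2 subgrid with `2` on one
diagonal and `1` on the other gives weight 6. Conversely, in `K_r × K_s` a vertex sharing a
row or a column with every vertex of `Q` is dominated by nothing and so lies in `P`. If `Q` is
empty, `P` is everything; if `Q = {a}`, `P` contains the row and column of `a` and a neighbour
of `a`, so `#P ≥ r + 2`; if `Q = {a, b}`, the undominated vertices together with the
neighbours of `a` and `b` give `#P ≥ 4`; and `#P ≥ #Q ≥ 3` otherwise.
-/

namespace IsTRDF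

variable {V : Type*} {G : SimpleGraph V} {f : V → ℕ}

theorem sum_eq_card_pos_add_card_two [Fintype V] (hf : IsTRDF G f) :
    ∑ v, f v = #{v | 0 < f v} + #{v | f v = 2} := by
  rw [card_filter, card_filter, ← sum_add_distrib]
  refine sum_congr rfl fun v _ => ?_
  have := hf.1 v
  split_ifs <;> omega

theorem pos_of_forall_two_not_adj (hf : IsTRDF G f) {v : V}
    (hv : ∀ u, f u = 2 → ¬G.Adj v u) : 0 < f v := by
  by_contra h
  obtain ⟨u, huv, hu⟩ := hf.2.1 v (by omega)
  exact hv u hu huv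

end IsTRDF

theorem four_le_card_pos_of_card_eq {V : Type*} [Fintype V] [DecidableEq V] {f : V → ℕ}
    {a b c d : V} (ha : 0 < f a) (hb : 0 < f b) (hc : 0 < f c) (hd : 0 < f d)
    (h : #{a, b, c, d} = 4) : 4 ≤ #{v | 0 < f v} :=
  h ▸ card_le_card fun x hx => mem_filter.2 ⟨mem_univ x, by
    simp only [mem_insert, mem_singleton] at hx
    obtain rfl | rfl | rfl | rfl := hx <;> assumption⟩

@[simp] theorem dirProd_top_adj {α β : Type*} {p q : α × β} :
    (dirProd (⊤ : SimpleGraph α) (⊤ : SimpleGraph β)).Adj p q ↔ p.1 ≠ q.1 ∧ p.2 ≠ q.2 :=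
  Iff.rfl

section SquareLabeling

variable {α β : Type*} [DecidableEq α] [DecidableEq β]

def squareLabeling (i₀ i₁ : α) (j₀ j₁ : β) (v : α × β) : ℕ :=
  if v = (i₀, j₀) ∨ v = (i₁, j₁) then 2 else if v = (i₀, j₁) ∨ v = (i₁, j₀) then 1 else 0

variable {i₀ i₁ : α} {j₀ j₁ : β}

theorem isTRDF_squareLabeling (hi : i₀ ≠ i₁) (hj : j₀ ≠ j₁) :
    IsTRDF (dirProd ⊤ ⊤) (squareLabeling i₀ i₁ j₀ j₁) := by
  refine ⟨fun v => ?_, fun v hv => ?_, fun v hv => ?_⟩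
  · unfold squareLabeling
    split_ifs <;> omega
  · by_cases h : v.1 ≠ i₀ ∧ v.2 ≠ j₀
    · exact ⟨(i₀, j₀), h, by simp [squareLabeling]⟩
    · refine ⟨(i₁, j₁), ?_, by simp [squareLabeling]⟩
      simp only [squareLabeling] at hv
      split_ifs at hv
      grind [Prod.ext_iff, dirProd_top_adj]
  · simp only [squareLabeling] at hv
    split_ifs at hv with h₂ h₁
    · obtain rfl | rfl := h₂
      · exact ⟨(i₁, j₁), by simp [hi, hj], by simp [squareLabeling]⟩
      · exact ⟨(i₀, j₀), by simp [hi.symm, hj.symm], by simp [squareLabeling]⟩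
    · obtain rfl | rfl := h₁
      · exact ⟨(i₁, j₀), by simp [hi, hj.symm], by simp [squareLabeling, hi.symm, hj]⟩
      · exact ⟨(i₀, j₁), by simp [hi.symm, hj], by simp [squareLabeling, hi, hj.symm]⟩
    · omega

theorem sum_squareLabeling [Fintype α] [Fintype β] (hi : i₀ ≠ i₁) (hj : j₀ ≠ j₁) :
    ∑ v, squareLabeling i₀ i₁ j₀ j₁ v = 6 := by
  rw [← sum_subset (subset_univ {(i₀, j₀), (i₁, j₁), (i₀, j₁), (i₁, j₀)})]
  · grind [sum_insert, sum_singleton, squareLabeling]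
  · intro v _ hv
    simp only [mem_insert, mem_singleton, not_or] at hv
    simp [squareLabeling, hv]

end SquareLabeling

namespace IsTRDF

variable {α β : Type*} {f : α × β → ℕ}

theorem pos_of_forall_two_fst_eq_or_snd_eq (hf : IsTRDF (dirProd ⊤ ⊤) f) {v : α × β}
    (hv : ∀ q, f q = 2 → v.1 = q.1 ∨ v.2 = q.2) : 0 < f v :=
  hf.pos_of_forall_two_not_adj fun q hq hvq => (hv q hq).elim hvq.1 hvq.2

theorem exists_pos_adj (hf : IsTRDF (dirProd ⊤ ⊤) f) {a : α × β} (ha : f a = 2) :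
    ∃ u, a.1 ≠ u.1 ∧ a.2 ≠ u.2 ∧ 0 < f u := by
  obtain ⟨u, hau, hu⟩ := hf.2.2 a (by omega)
  exact ⟨u, hau.1, hau.2, hu⟩

variable [Fintype α] [Fintype β] [DecidableEq α] [DecidableEq β]

theorem card_add_one_le_card_pos_of_forall_two_snd_eq (hf : IsTRDF (dirProd ⊤ ⊤) f)
    {a : α × β} (ha : f a = 2) (hQ : ∀ q, f q = 2 → q.2 = a.2) :
    Fintype.card α + 1 ≤ #{v | 0 < f v} := by
  obtain ⟨u, -, hu, hu_pos⟩ := hf.exists_pos_adj ha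
  calc Fintype.card α + 1 = #(insert u (univ ×ˢ {a.2})) := by
        rw [card_insert_of_notMem fun h => hu (mem_singleton.1 (mem_product.1 h).2).symm,
          card_product, card_univ, card_singleton, mul_one]
    _ ≤ #{v | 0 < f v} := by
        refine card_le_card fun v hv => mem_filter.2 ⟨mem_univ v, ?_⟩
        obtain rfl | hv := mem_insert.1 hv
        · exact hu_pos
        · exact hf.pos_of_forall_two_fst_eq_or_snd_eq fun q hq =>
            Or.inr ((mem_product.1 hv).2 |> mem_singleton.1 |>.trans (hQ q hq).symm)

theorem card_add_two_le_card_pos_of_forall_two_eq (hf : IsTRDF (dirProd ⊤ ⊤) f)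
    (hβ : 2 ≤ Fintype.card β) {a : α × β} (ha : f a = 2) (hQ : ∀ q, f q = 2 → q = a) :
    Fintype.card α + 2 ≤ #{v | 0 < f v} := by
  obtain ⟨w, hw⟩ := Fintype.exists_ne_of_one_lt_card hβ a.2
  obtain ⟨u, hu₁, hu₂, hu_pos⟩ := hf.exists_pos_adj ha
  calc Fintype.card α + 2 = #(insert (a.1, w) (insert u (univ ×ˢ {a.2}))) := by
        rw [card_insert_of_notMem, card_insert_of_notMem
          fun h => hu₂ (mem_singleton.1 (mem_product.1 h).2).symm,
          card_product, card_univ, card_singleton, mul_one]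
        simp [Prod.ext_iff, hw.symm, hu₁]
    _ ≤ #{v | 0 < f v} := by
        refine card_le_card fun v hv => mem_filter.2 ⟨mem_univ v, ?_⟩
        simp only [mem_insert, mem_product, mem_singleton, mem_univ, true_and] at hv
        obtain rfl | rfl | hv := hv
        · exact hf.pos_of_forall_two_fst_eq_or_snd_eq fun q hq => Or.inl (by rw [hQ q hq])
        · exact hu_pos
        · exact hf.pos_of_forall_two_fst_eq_or_snd_eq fun q hq => Or.inr (by rw [hQ q hq, hv])

theorem four_le_card_pos_of_adj (hf : IsTRDF (dirProd ⊤ ⊤) f) {a b : α × β}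
    (ha : f a = 2) (hb : f b = 2) (hQ : ∀ q, f q = 2 → q = a ∨ q = b)
    (h₁ : a.1 ≠ b.1) (h₂ : a.2 ≠ b.2) : 4 ≤ #{v | 0 < f v} := by
  have hpos : ∀ v : α × β, (v.1 = a.1 ∨ v.2 = a.2) → (v.1 = b.1 ∨ v.2 = b.2) → 0 < f v :=
    fun v hva hvb => hf.pos_of_forall_two_fst_eq_or_snd_eq fun q hq => by
      obtain rfl | rfl := hQ q hq <;> assumption
  refine four_le_card_pos_of_card_eq (a := a) (b := b) (by omega) (by omega)
    (hpos (a.1, b.2) (Or.inl rfl) (Or.inr rfl)) (hpos (b.1, a.2) (Or.inr rfl) (Or.inl rfl)) ?_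
  grind [card_insert_of_notMem, card_pair, Prod.ext_iff]

theorem four_le_card_pos_of_fst_eq (hf : IsTRDF (dirProd ⊤ ⊤) f) {a b : α × β}
    (ha : f a = 2) (hb : f b = 2) (hQ : ∀ q, f q = 2 → q = a ∨ q = b)
    (h₁ : a.1 = b.1) (h₂ : a.2 ≠ b.2) : 4 ≤ #{v | 0 < f v} := by
  obtain ⟨u, hu₁, hu₂, hu⟩ := hf.exists_pos_adj ha
  by_cases hub : u.2 = b.2
  · obtain ⟨v, hv₁, hv₂, hv⟩ := hf.exists_pos_adj hb
    refine four_le_card_pos_of_card_eq (a := a) (b := b) (by omega) (by omega) hu hv ?_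
    grind [card_insert_of_notMem, card_pair, Prod.ext_iff]
  · have hw : 0 < f (a.1, u.2) := hf.pos_of_forall_two_fst_eq_or_snd_eq fun q hq => by
      obtain rfl | rfl := hQ q hq
      exacts [Or.inl rfl, Or.inl h₁]
    refine four_le_card_pos_of_card_eq (a := a) (b := b) (by omega) (by omega) hu hw ?_
    grind [card_insert_of_notMem, card_pair, Prod.ext_iff]

theorem four_le_card_pos_of_forall_two_eq_or_eq (hf : IsTRDF (dirProd ⊤ ⊤) f)
    (hα : 3 ≤ Fintype.card α) {a b : α × β} (ha : f a = 2) (hb : f b = 2) (hab : a ≠ b)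
    (hQ : ∀ q, f q = 2 → q = a ∨ q = b) : 4 ≤ #{v | 0 < f v} := by
  by_cases h₂ : a.2 = b.2
  · have := hf.card_add_one_le_card_pos_of_forall_two_snd_eq ha fun q hq => by
      obtain rfl | rfl := hQ q hq
      exacts [rfl, h₂.symm]
    omega
  by_cases h₁ : a.1 = b.1
  · exact hf.four_le_card_pos_of_fst_eq ha hb hQ h₁ h₂
  · exact hf.four_le_card_pos_of_adj ha hb hQ h₁ h₂

theorem six_le_sum (hf : IsTRDF (dirProd ⊤ ⊤) f) (hα : 3 ≤ Fintype.card α)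
    (hβ : 2 ≤ Fintype.card β) : 6 ≤ ∑ v, f v := by
  rw [hf.sum_eq_card_pos_add_card_two]
  have hQP : #{v | f v = 2} ≤ #{v | 0 < f v} :=
    card_le_card <| monotone_filter_right _ fun v hv => by omega
  obtain h | h | h | h : #{v | f v = 2} = 0 ∨ #{v | f v = 2} = 1 ∨ #{v | f v = 2} = 2 ∨
      3 ≤ #{v | f v = 2} := by omega
  · have hP : #{v | 0 < f v} = Fintype.card α * Fintype.card β := by
      rw [← Fintype.card_prod, ← card_univ]
      congr 1
      exact filter_true_of_mem fun v _ => hf.pos_of_forall_two_not_adj fun u hu _ =>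
        filter_eq_empty_iff.1 (card_eq_zero.1 h) (mem_univ u) hu
    nlinarith
  · obtain ⟨a, ha⟩ := card_eq_one.1 h
    have hQ : ∀ q, f q = 2 ↔ q = a := by simpa using Finset.ext_iff.1 ha
    have := hf.card_add_two_le_card_pos_of_forall_two_eq hβ ((hQ a).2 rfl) fun q => (hQ q).1
    omega
  · obtain ⟨a, b, hab, hQab⟩ := card_eq_two.1 h
    have hQ : ∀ q, f q = 2 ↔ q = a ∨ q = b := by simpa using Finset.ext_iff.1 hQab
    have := hf.four_le_card_pos_of_forall_two_eq_or_eq hα ((hQ a).2 (.inl rfl))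
      ((hQ b).2 (.inr rfl)) hab fun q => (hQ q).1
    omega
  · omega

end IsTRDF

theorem trdn_dirProd_top {α β : Type*} [Fintype α] [Fintype β]
    (hα : 3 ≤ Fintype.card α) (hβ : 2 ≤ Fintype.card β) :
    trdn (dirProd (⊤ : SimpleGraph α) (⊤ : SimpleGraph β)) = 6 := by
  classical
  obtain ⟨i₀, i₁, hi⟩ := Fintype.exists_pair_of_one_lt_card (by omega : 1 < Fintype.card α)
  obtain ⟨j₀, j₁, hj⟩ := Fintype.exists_pair_of_one_lt_card (by omega : 1 < Fintype.card β)
  have h6 : 6 ∈ {w | ∃ f, IsTRDF (dirProd (⊤ : SimpleGraph α) ⊤) f ∧ ∑ v, f v = w} :=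
    ⟨_, isTRDF_squareLabeling hi hj, sum_squareLabeling hi hj⟩
  refine le_antisymm (Nat.sInf_le h6) (le_csInf ⟨6, h6⟩ ?_)
  rintro w ⟨f, hf, rfl⟩
  exact hf.six_le_sum hα hβ

theorem stmt_17 (r s : ℕ) (hr : 2 < r) (hs : 2 ≤ s) :
    trdn (dirProd (⊤ : SimpleGraph (Fin r)) (⊤ : SimpleGraph (Fin s))) = 6 :=
  trdn_dirProd_top (by rw [Fintype.card_fin]; omega) (by rwa [Fintype.card_fin])
end
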